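/- Let x ∈ M_6(ℂ) satisfy x* = x (where x* = J⁻¹xᵀJ, J = [[0,-I₃],[I₃,0]]) and tr x = tr x² = tr x³ = 0. Then x³ = 0. -/
import Mathlib

open Matrix

noncomputable def J (n : ℕ) : Matrix (Fin n ⊕ Fin n) (Fin n ⊕ Fin n) ℂ :=
  Matrix.fromBlocks 0 (-1) 1 0

noncomputable def sadj (n : ℕ) (X : Matrix (Fin n ⊕ Fin n) (Fin n ⊕ Fin n) ℂ) :
    Matrix (Fin n ⊕ Fin n) (Fin n ⊕ Fin n) ℂ :=
  (J n)⁻¹ * Xᵀ * J n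

set_option maxHeartbeats 3200000 in
/-- If `x ∈ 𝔭 ⊂ M_6(ℂ)` and `tr x = tr x² = tr x³ = 0` then `x³ = 0`. -/
theorem cube_eq_zero_of_selfadjoint (x : Matrix (Fin 3 ⊕ Fin 3) (Fin 3 ⊕ Fin 3) ℂ)
    (hx : sadj 3 x = x) (h1 : Matrix.trace x = 0)
    (h2 : Matrix.trace (x ^ 2) = 0) (h3 : Matrix.trace (x ^ 3) = 0) :
    x ^ 3 = 0 := by
  have Jdef : _root_.J 3 = Matrix.fromBlocks 0 (-1) 1 0 := rfl
  have hJinv : (_root_.J 3)⁻¹ = Matrix.fromBlocks 0 1 (-1) 0 := by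
    apply inv_eq_left_inv
    rw [Jdef, Matrix.fromBlocks_multiply]
    simp
  have hJ : xᵀ * _root_.J 3 = _root_.J 3 * x := by
    have h := congrArg (fun y => _root_.J 3 * y) hx
    simp only [sadj, hJinv] at h
    rw [← h]
    rw [show _root_.J 3 * (Matrix.fromBlocks 0 1 (-1) 0 * xᵀ * _root_.J 3)
        = (_root_.J 3 * Matrix.fromBlocks 0 1 (-1) 0) * (xᵀ * _root_.J 3) by noncomm_ring]
    rw [show _root_.J 3 * Matrix.fromBlocks 0 1 (-1) 0 = 1 by
      rw [Jdef, Matrix.fromBlocks_multiply]; simp]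
    rw [one_mul]
  have hd : ∀ i j : Fin 3, x (Sum.inr i) (Sum.inr j) = x (Sum.inl j) (Sum.inl i) := by
    intro i j
    have h := congrFun (congrFun hJ (Sum.inl i)) (Sum.inr j)
    simpa [Jdef, mul_apply, Fintype.sum_sum_type, Matrix.one_apply] using h.symm
  have hb : ∀ i j : Fin 3, x (Sum.inl i) (Sum.inr j) = - x (Sum.inl j) (Sum.inr i) := by
    intro i j
    have h := congrFun (congrFun hJ (Sum.inr j)) (Sum.inr i)
    simp [Jdef, mul_apply, Fintype.sum_sum_type, Matrix.one_apply] at h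
    linear_combination -h
  have hc : ∀ i j : Fin 3, x (Sum.inr i) (Sum.inl j) = - x (Sum.inr j) (Sum.inl i) := by
    intro i j
    have h := congrFun (congrFun hJ (Sum.inl j)) (Sum.inl i)
    simp [Jdef, mul_apply, Fintype.sum_sum_type, Matrix.one_apply] at h
    linear_combination h
  have hbd : ∀ i : Fin 3, x (Sum.inl i) (Sum.inr i) = 0 := by
    intro i; have h := hb i i; linear_combination h / 2
  have hcd : ∀ i : Fin 3, x (Sum.inr i) (Sum.inl i) = 0 := by
    intro i; have h := hc i i; linear_combination h / 2
  have hb10 : x (Sum.inl 1) (Sum.inr 0) = - x (Sum.inl 0) (Sum.inr 1) := hb 1 0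
  have hb20 : x (Sum.inl 2) (Sum.inr 0) = - x (Sum.inl 0) (Sum.inr 2) := hb 2 0
  have hb21 : x (Sum.inl 2) (Sum.inr 1) = - x (Sum.inl 1) (Sum.inr 2) := hb 2 1
  have hc10 : x (Sum.inr 1) (Sum.inl 0) = - x (Sum.inr 0) (Sum.inl 1) := hc 1 0
  have hc20 : x (Sum.inr 2) (Sum.inl 0) = - x (Sum.inr 0) (Sum.inl 2) := hc 2 0
  have hc21 : x (Sum.inr 2) (Sum.inl 1) = - x (Sum.inr 1) (Sum.inl 2) := hc 2 1
  -- the three scalar invariants vanish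
  have hA : (x (Sum.inl 0) (Sum.inl 0) + x (Sum.inl 1) (Sum.inl 1) + x (Sum.inl 2) (Sum.inl 2)) = 0 := by
    simp only [Matrix.trace, Fintype.sum_sum_type, Matrix.diag, Fin.sum_univ_three, hd] at h1
    linear_combination h1 / 2
  have hQ1 : ((1:ℂ) * x (Sum.inl 1) (Sum.inr 2) * x (Sum.inr 1) (Sum.inl 2) + (1:ℂ) * x (Sum.inl 0) (Sum.inr 2) * x (Sum.inr 0) (Sum.inl 2) + (1:ℂ) * x (Sum.inl 0) (Sum.inr 1) * x (Sum.inr 0) (Sum.inl 1) + (-1:ℂ) * x (Sum.inl 1) (Sum.inl 2) * x (Sum.inl 2) (Sum.inl 1) + (1:ℂ) * x (Sum.inl 1) (Sum.inl 1) * x (Sum.inl 2) (Sum.inl 2) + (-1:ℂ) * x (Sum.inl 0) (Sum.inl 2) * x (Sum.inl 2) (Sum.inl 0) + (-1:ℂ) * x (Sum.inl 0) (Sum.inl 1) * x (Sum.inl 1) (Sum.inl 0) + (1:ℂ) * x (Sum.inl 0) (Sum.inl 0) * x (Sum.inl 2) (Sum.inl 2) + (1:ℂ) * x (Sum.inl 0)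 (Sum.inl 0) * x (Sum.inl 1) (Sum.inl 1)) = 0 := by
    have h2' := h2
    rw [pow_two] at h2'
    simp only [Matrix.trace, Fintype.sum_sum_type, Matrix.diag, Fin.sum_univ_three,
      mul_apply, hd, hbd, hcd, hb10, hb20, hb21, hc10, hc20, hc21] at h2'
    linear_combination (-1/4 : ℂ) * h2' + ((1/2 : ℂ) * (x (Sum.inl 0) (Sum.inl 0) + x (Sum.inl 1) (Sum.inl 1) + x (Sum.inl 2) (Sum.inl 2))) * hA
  have hQ0 : ((-1:ℂ) * x (Sum.inl 2) (Sum.inl 2) * x (Sum.inl 0) (Sum.inr 1) * x (Sum.inr 0) (Sum.inl 1) + (1:ℂ) * x (Sum.inl 2) (Sum.inl 1) * x (Sum.inl 0) (Sum.inr 1) * x (Sum.inr 0) (Sum.inl 2) + (-1:ℂ) * x (Sum.inl 2) (Sum.inl 0) * x (Sum.inl 0) (Sum.inr 1) * x (Sum.inr 1) (Sum.inl 2) + (1:ℂ) * x (Sum.inl 1) (Sum.inl 2) * x (Sum.inl 0) (Sum.inr 2) * x (Sum.inr 0) (Sum.inl 1) + (-1:ℂ) * x (Sum.inl 1) (Sum.inl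 1) * x (Sum.inl 0) (Sum.inr 2) * x (Sum.inr 0) (Sum.inl 2) + (1:ℂ) * x (Sum.inl 1) (Sum.inl 0) * x (Sum.inl 0) (Sum.inr 2) * x (Sum.inr 1) (Sum.inl 2) + (-1:ℂ) * x (Sum.inl 0) (Sum.inl 2) * x (Sum.inl 1) (Sum.inr 2) * x (Sum.inr 0) (Sum.inl 1) + (1:ℂ) * x (Sum.inl 0) (Sum.inl 2) * x (Sum.inl 1) (Sum.inl 1) * x (Sum.inl 2) (Sum.inl 0) + (-1:ℂ) * x (Sum.inl 0) (Sum.inl 2) * x (Sum.inl 1) (Sum.inl 0) * x (Sum.inl 2) (Sum.inl 1) + (1:ℂ) * x (Sum.inl 0) (Sum.inl 1) * x (Sum.inl 1) (Sum.inr 2) * x (Sum.inr 0) (Sum.inl 2) + (-1:ℂ) * x (Sum.inl 0) (Sum.inl 1) * x (Sum.inl 1) (Sum.inl 2) * x (Sum.inl 2) (Sum.inl 0) + (1:ℂ) * x (Sum.inl 0) (Sum.inl 1) * x (Sum.inl 1) (Sum.inl 0) * x (Sum.inl 2) (Sum.inl 2) + (-1:ℂ) * x (Sum.inl 0) (Sum.inl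 0) * x (Sum.inl 1) (Sum.inr 2) * x (Sum.inr 1) (Sum.inl 2) + (1:ℂ) * x (Sum.inl 0) (Sum.inl 0) * x (Sum.inl 1) (Sum.inl 2) * x (Sum.inl 2) (Sum.inl 1) + (-1:ℂ) * x (Sum.inl 0) (Sum.inl 0) * x (Sum.inl 1) (Sum.inl 1) * x (Sum.inl 2) (Sum.inl 2)) = 0 := by
    have h3' := h3
    rw [pow_succ, pow_two] at h3'
    simp only [Matrix.trace, Fintype.sum_sum_type, Matrix.diag, Fin.sum_univ_three,
      mul_apply, Finset.sum_mul, hd, hbd, hcd, hb10, hb20, hb21, hc10, hc20, hc21] at h3'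
    linear_combination (-1/6 : ℂ) * h3' + ((1/3 : ℂ) * (x (Sum.inl 0) (Sum.inl 0) + x (Sum.inl 1) (Sum.inl 1) + x (Sum.inl 2) (Sum.inl 2)) * (x (Sum.inl 0) (Sum.inl 0) + x (Sum.inl 1) (Sum.inl 1) + x (Sum.inl 2) (Sum.inl 2))) * hA - (x (Sum.inl 0) (Sum.inl 0) + x (Sum.inl 1) (Sum.inl 1) + x (Sum.inl 2) (Sum.inl 2)) * hQ1
  -- the key identity : x³ = (tr A) • x² - q1 • x - q0 • 1  (Cayley–Hamilton for the
  -- Pfaffian square root of the characteristic polynomial)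
  have key : x * x * x = (x (Sum.inl 0) (Sum.inl 0) + x (Sum.inl 1) (Sum.inl 1) + x (Sum.inl 2) (Sum.inl 2)) • (x * x) - ((1:ℂ) * x (Sum.inl 1) (Sum.inr 2) * x (Sum.inr 1) (Sum.inl 2) + (1:ℂ) * x (Sum.inl 0) (Sum.inr 2) * x (Sum.inr 0) (Sum.inl 2) + (1:ℂ) * x (Sum.inl 0) (Sum.inr 1) * x (Sum.inr 0) (Sum.inl 1) + (-1:ℂ) * x (Sum.inl 1) (Sum.inl 2) * x (Sum.inl 2) (Sum.inl 1) + (1:ℂ) * x (Sum.inl 1) (Sum.inl 1) * x (Sum.inl 2) (Sum.inl 2) + (-1:ℂ) * x (Sum.inl 0) (Sum.inl 2) * x (Sum.inl 2) (Sum.inl 0) + (-1:ℂ) * x (Sum.inl 0) (Sum.inl 1) * x (Sum.inl 1) (Sum.inl 0) + (1:ℂ) * x (Sum.inl 0) (Sum.inl 0) * x (Sum.inl 2) (Sum.inl 2) + (1:ℂ) * x (Sum.inl 0) (Sum.inl 0) * x (Sum.inl 1) (Sum.inl 1)) • x - ((-1:ℂ) * x (Sum.inl 2) (Sum.inl 2)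 * x (Sum.inl 0) (Sum.inr 1) * x (Sum.inr 0) (Sum.inl 1) + (1:ℂ) * x (Sum.inl 2) (Sum.inl 1) * x (Sum.inl 0) (Sum.inr 1) * x (Sum.inr 0) (Sum.inl 2) + (-1:ℂ) * x (Sum.inl 2) (Sum.inl 0) * x (Sum.inl 0) (Sum.inr 1) * x (Sum.inr 1) (Sum.inl 2) + (1:ℂ) * x (Sum.inl 1) (Sum.inl 2) * x (Sum.inl 0) (Sum.inr 2) * x (Sum.inr 0) (Sum.inl 1) + (-1:ℂ) * x (Sum.inl 1) (Sum.inl 1) * x (Sum.inl 0) (Sum.inr 2) * x (Sum.inr 0) (Sum.inl 2) + (1:ℂ) * x (Sum.inl 1) (Sum.inl 0) * x (Sum.inl 0) (Sum.inr 2) * x (Sum.inr 1) (Sum.inl 2) + (-1:ℂ) * x (Sum.inl 0) (Sum.inl 2) * x (Sum.inl 1) (Sum.inr 2) * x (Sum.inr 0) (Sum.inl 1) + (1:ℂ) * x (Sum.inl 0) (Sum.inl 2) * x (Sum.inl 1) (Sum.inl 1) * x (Sum.inl 2) (Sum.inl 0) + (-1:ℂ) * x (Sum.inl 0) (Sum.inl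 2) * x (Sum.inl 1) (Sum.inl 0) * x (Sum.inl 2) (Sum.inl 1) + (1:ℂ) * x (Sum.inl 0) (Sum.inl 1) * x (Sum.inl 1) (Sum.inr 2) * x (Sum.inr 0) (Sum.inl 2) + (-1:ℂ) * x (Sum.inl 0) (Sum.inl 1) * x (Sum.inl 1) (Sum.inl 2) * x (Sum.inl 2) (Sum.inl 0) + (1:ℂ) * x (Sum.inl 0) (Sum.inl 1) * x (Sum.inl 1) (Sum.inl 0) * x (Sum.inl 2) (Sum.inl 2) + (-1:ℂ) * x (Sum.inl 0) (Sum.inl 0) * x (Sum.inl 1) (Sum.inr 2) * x (Sum.inr 1) (Sum.inl 2) + (1:ℂ) * x (Sum.inl 0) (Sum.inl 0) * x (Sum.inl 1) (Sum.inl 2) * x (Sum.inl 2) (Sum.inl 1) + (-1:ℂ) * x (Sum.inl 0) (Sum.inl 0) * x (Sum.inl 1) (Sum.inl 1) * x (Sum.inl 2) (Sum.inl 2)) • 1 := by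
    ext i j
    rcases i with i | i <;> rcases j with j | j <;> fin_cases i <;> fin_cases j <;>
      · simp only [mul_apply, Fintype.sum_sum_type, Fin.sum_univ_three, Finset.sum_mul,
          Matrix.sub_apply, Matrix.smul_apply, Matrix.one_apply, smul_eq_mul,
          Sum.inl.injEq, Sum.inr.injEq, reduceCtorEq, Fin.isValue, reduceIte,
          Fin.zero_eta, Fin.mk_one, Fin.reduceFinMk, Fin.reduceEq, one_ne_zero,
          if_true, if_false, ite_true, ite_false,
          hd, hbd, hcd, hb10, hb20, hb21, hc10, hc20, hc21]
        ring
  rw [pow_succ, pow_two, key, hA, hQ1, hQ0]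
  simp
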